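/- Let X be a compact metric space, K ⊆ X a compact subset, and g : X → X a homeomorphism, and set Λ_g(K) = ⋂_{n ∈ ℤ} gⁿ(K). For every open set V ⊆ X with Λ_g(K) ⊆ V there exists δ > 0 such that every homeomorphism h : X → X satisfying sup_{x ∈ X} d(h(x), g(x)) < δ and sup_{x ∈ X} d(h⁻¹(x), g⁻¹(x)) < δ also satisfies Λ_h(K) ⊆ V. -/
import Mathlib


open Topology

/-- The maximal invariant set of a homeomorphism `g` in a set `K`:
`Λ_g(K) = ⋂_{n ∈ ℤ} gⁿ(K)`. -/
def maximalInvariantSet {X : Type*} [TopologicalSpace X] (g : X ≃ₜ X) (K : Set X) : Set X :=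
  ⋂ n : ℤ, ⇑(g.toEquiv ^ n) '' K

private lemma iterate_close_aux {X : Type*} [MetricSpace X] [CompactSpace X]
    (g : X → X) (hg : Continuous g) (N : ℕ) :
    ∀ ε > (0 : ℝ), ∃ δ > (0 : ℝ), ∀ h : X → X, (∀ x, dist (h x) (g x) < δ) →
      ∀ y, dist (h^[N] y) (g^[N] y) < ε := by
  induction N with
  | zero =>
    intro ε hε
    exact ⟨ε, hε, fun h _ y => by simpa using hε⟩
  | succ N ih =>
    intro ε hε
    have hug : UniformContinuous g := CompactSpace.uniformContinuous_of_continuous hg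
    obtain ⟨δ', hδ', hδ'g⟩ := Metric.uniformContinuous_iff.mp hug (ε / 2) (by linarith)
    obtain ⟨δ₁, hδ₁, hδ₁g⟩ := ih δ' hδ'
    refine ⟨min (ε / 2) δ₁, by positivity, fun h hh y => ?_⟩
    have h1 : dist (h^[N] y) (g^[N] y) < δ' :=
      hδ₁g h (fun x => (hh x).trans_le (min_le_right _ _)) y
    calc dist (h^[N + 1] y) (g^[N + 1] y)
        ≤ dist (h (h^[N] y)) (g (h^[N] y)) + dist (g (h^[N] y)) (g (g^[N] y)) := by
          rw [Function.iterate_succ_apply', Function.iterate_succ_apply']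
          exact dist_triangle _ _ _
      _ < ε / 2 + ε / 2 :=
          add_lt_add ((hh _).trans_le (min_le_left _ _)) (hδ'g h1)
      _ = ε := by linarith

private lemma zpow_coe_eq {X : Type*} [TopologicalSpace X] (g : X ≃ₜ X) :
    ∀ n : ℤ, (∃ m : ℕ, ⇑(g.toEquiv ^ n) = (⇑g)^[m]) ∨
      (∃ m : ℕ, ⇑(g.toEquiv ^ n) = (⇑g.symm)^[m]) := by
  intro n
  rcases n with m | m
  · left
    refine ⟨m, ?_⟩
    rw [Int.ofNat_eq_coe, zpow_natCast, Equiv.Perm.coe_pow]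
    rfl
  · right
    refine ⟨m + 1, ?_⟩
    rw [zpow_negSucc, ← inv_pow, Equiv.Perm.coe_pow]
    rfl

private lemma continuous_zpow_coe {X : Type*} [TopologicalSpace X] (g : X ≃ₜ X) (n : ℤ) :
    Continuous ⇑(g.toEquiv ^ n) := by
  rcases zpow_coe_eq g n with ⟨m, hm⟩ | ⟨m, hm⟩ <;> rw [hm]
  · exact g.continuous.iterate m
  · exact g.symm.continuous.iterate m

private lemma zpow_close {X : Type*} [MetricSpace X] [CompactSpace X]
    (g : X ≃ₜ X) (n : ℤ) :
    ∀ ε > (0 : ℝ), ∃ δ > (0 : ℝ), ∀ h : X ≃ₜ X,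
      (∀ x, dist (h x) (g x) < δ) → (∀ x, dist (h.symm x) (g.symm x) < δ) →
      ∀ y, dist ((h.toEquiv ^ n) y) ((g.toEquiv ^ n) y) < ε := by
  intro ε hε
  rcases n with m | m
  · obtain ⟨δ, hδ, H⟩ := iterate_close_aux (⇑g) g.continuous m ε hε
    refine ⟨δ, hδ, fun h hh _ y => ?_⟩
    have h1 : ⇑(h.toEquiv ^ (Int.ofNat m)) = (⇑h)^[m] := by
      rw [Int.ofNat_eq_coe, zpow_natCast, Equiv.Perm.coe_pow]; rfl
    have h2 : ⇑(g.toEquiv ^ (Int.ofNat m)) = (⇑g)^[m] := by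
      rw [Int.ofNat_eq_coe, zpow_natCast, Equiv.Perm.coe_pow]; rfl
    rw [h1, h2]
    exact H (⇑h) hh y
  · obtain ⟨δ, hδ, H⟩ := iterate_close_aux (⇑g.symm) g.symm.continuous (m + 1) ε hε
    refine ⟨δ, hδ, fun h _ hh y => ?_⟩
    have h1 : ⇑(h.toEquiv ^ (Int.negSucc m)) = (⇑h.symm)^[m + 1] := by
      rw [zpow_negSucc, ← inv_pow, Equiv.Perm.coe_pow]; rfl
    have h2 : ⇑(g.toEquiv ^ (Int.negSucc m)) = (⇑g.symm)^[m + 1] := by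
      rw [zpow_negSucc, ← inv_pow, Equiv.Perm.coe_pow]; rfl
    rw [h1, h2]
    exact H (⇑h.symm) hh y

/-- Maximal invariant sets vary upper semicontinuously with the map: if `Λ_g(K) ⊆ V`
with `V` open, then every homeomorphism `h` uniformly `δ`-close to `g` (together with
its inverse) satisfies `Λ_h(K) ⊆ V`. -/
theorem maximalInvariantSet_upper_semicontinuous
    {X : Type*} [MetricSpace X] [CompactSpace X]
    (K : Set X) (hK : IsCompact K) (g : X ≃ₜ X)
    (V : Set X) (hV : IsOpen V) (hΛV : maximalInvariantSet g K ⊆ V) :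
    ∃ δ > (0 : ℝ), ∀ h : X ≃ₜ X,
      (⨆ x, dist (h x) (g x)) < δ →
      (⨆ x, dist (h.symm x) (g.symm x)) < δ →
      maximalInvariantSet h K ⊆ V := by
  classical
  -- trivial cases
  by_cases hKne : K.Nonempty
  swap
  · refine ⟨1, one_pos, fun h _ _ x hx => ?_⟩
    exfalso
    have hx0 : x ∈ ⇑(h.toEquiv ^ (0 : ℤ)) '' K := Set.mem_iInter.mp hx 0
    obtain ⟨y, hy, -⟩ := hx0
    exact hKne ⟨y, hy⟩
  by_cases hVc : (Vᶜ : Set X).Nonempty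
  swap
  · refine ⟨1, one_pos, fun h _ _ x _ => ?_⟩
    by_contra hxV
    exact hVc ⟨x, hxV⟩
  -- the compact sets gⁿ(K)
  set S : ℤ → Set X := fun n => ⇑(g.toEquiv ^ n) '' K with hS
  have hScomp : ∀ n, IsCompact (S n) := fun n => hK.image (continuous_zpow_coe g n)
  have hSclosed : ∀ n, IsClosed (S n) := fun n => (hScomp n).isClosed
  have hSne : ∀ n, (S n).Nonempty := fun n => hKne.image _
  -- finite subfamily
  have hVcclosed : IsClosed (Vᶜ : Set X) := hV.isClosed_compl
  have hVccomp : IsCompact (Vᶜ : Set X) := hVcclosed.isCompact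
  have hinter : (Vᶜ : Set X) ∩ ⋂ n, S n = ∅ := by
    rw [Set.eq_empty_iff_forall_notMem]
    rintro x ⟨hxc, hx⟩
    exact hxc (hΛV hx)
  obtain ⟨t, ht⟩ := hVccomp.elim_finite_subfamily_closed S hSclosed hinter
  have htne : t.Nonempty := by
    rcases Finset.eq_empty_or_nonempty t with rfl | h
    · exfalso
      obtain ⟨x, hx⟩ := hVc
      rw [Set.eq_empty_iff_forall_notMem] at ht
      exact ht x ⟨hx, by simp⟩
    · exact h
  -- minimum of the max-distance function over Vᶜ
  set f : X → ℝ := fun x => t.sup' htne (fun n => Metric.infDist x (S n)) with hf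
  have hfcont : Continuous f :=
    Continuous.finset_sup'_apply htne fun n _ => Metric.continuous_infDist_pt (S n)
  obtain ⟨x₀, hx₀mem, hx₀min⟩ := hVccomp.exists_isMinOn hVc hfcont.continuousOn
  set ε := f x₀ with hε
  have hεpos : 0 < ε := by
    have hx₀not : x₀ ∉ ⋂ n ∈ t, S n := by
      intro hmem
      rw [Set.eq_empty_iff_forall_notMem] at ht
      exact ht x₀ ⟨hx₀mem, hmem⟩
    rw [Set.mem_iInter₂] at hx₀not
    push_neg at hx₀not
    obtain ⟨n, hn, hxn⟩ := hx₀not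
    have hpos : 0 < Metric.infDist x₀ (S n) :=
      ((hSclosed n).notMem_iff_infDist_pos (hSne n)).mp hxn
    have : Metric.infDist x₀ (S n) ≤ t.sup' htne (fun n => Metric.infDist x₀ (S n)) :=
      Finset.le_sup' (fun n => Metric.infDist x₀ (S n)) hn
    exact lt_of_lt_of_le hpos this
  -- choose δ
  choose δf hδfpos hδf using fun n : ℤ => zpow_close g n ε hεpos
  set δ : ℝ := t.inf' htne δf with hδdef
  have hδpos : 0 < δ := by
    rw [hδdef, Finset.lt_inf'_iff]
    exact fun n _ => hδfpos n
  refine ⟨δ, hδpos, fun h hh1 hh2 x hx => ?_⟩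
  -- pointwise closeness from sup closeness
  have hbdd : ∀ u v : X → X, BddAbove (Set.range fun x => dist (u x) (v x)) := by
    intro u v
    refine ⟨Metric.diam (Set.univ : Set X), ?_⟩
    rintro r ⟨x, rfl⟩
    exact Metric.dist_le_diam_of_mem isCompact_univ.isBounded trivial trivial
  have hh1' : ∀ x, dist (h x) (g x) < δ := fun x =>
    lt_of_le_of_lt (le_ciSup (hbdd _ _) x) hh1
  have hh2' : ∀ x, dist (h.symm x) (g.symm x) < δ := fun x =>
    lt_of_le_of_lt (le_ciSup (hbdd _ _) x) hh2
  -- main argument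
  by_contra hxV
  have hxVc : x ∈ (Vᶜ : Set X) := hxV
  have hεle : ε ≤ f x := hx₀min hxVc
  obtain ⟨n, hn, hfx⟩ := Finset.exists_mem_eq_sup' htne (fun n => Metric.infDist x (S n))
  have hδle : δ ≤ δf n := Finset.inf'_le _ hn
  have hh1'' : ∀ x, dist (h x) (g x) < δf n := fun x => lt_of_lt_of_le (hh1' x) hδle
  have hh2'' : ∀ x, dist (h.symm x) (g.symm x) < δf n := fun x => lt_of_lt_of_le (hh2' x) hδle
  -- x ∈ hⁿ(K)
  have hxh : x ∈ ⇑(h.toEquiv ^ n) '' K := Set.mem_iInter.mp hx n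
  obtain ⟨y, hyK, hxy⟩ := hxh
  have hclose : dist ((h.toEquiv ^ n) y) ((g.toEquiv ^ n) y) < ε := hδf n h hh1'' hh2'' y
  have hmem : (g.toEquiv ^ n) y ∈ S n := Set.mem_image_of_mem _ hyK
  have hlt : Metric.infDist x (S n) < ε := by
    calc Metric.infDist x (S n) ≤ dist x ((g.toEquiv ^ n) y) := Metric.infDist_le_dist_of_mem hmem
      _ = dist ((h.toEquiv ^ n) y) ((g.toEquiv ^ n) y) := by rw [hxy]
      _ < ε := hclose
  rw [← hfx] at hlt
  exact absurd (lt_of_le_of_lt hεle hlt) (lt_irrefl _)
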